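/- arXiv:1201.1323 — 7 statements merged into one kernel-verified Lean document; each statement's English description precedes it below -/
import Mathlib

section
/- For all parameters a,b,c,d, each a natural number or the symbol ∅, and all n ≥ 1, the polynomial R_n^{(a,b,c,d)}(x) satisfies R_n^{(a,b,c,d)}(x) = R_n^{(d,a,b,c)}(x) = R_n^{(c,b,a,d)}(x) = R_n^{(b,a,d,c)}(x) = R_n^{(d,c,b,a)}(x) = R_n^{(a,d,c,b)}(x) = R_n^{(c,d,a,b)}(x) = R_n^{(b,c,d,a)}(x). -/
/-- A parameter of a simple marked mesh pattern is either a natural number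
(`some a`, meaning "at least `a` points") or the symbol ∅ (`none`, meaning
"exactly 0 points").  `pcond p m` says that a quadrant containing `m` points
satisfies the parameter `p`. -/
def pcond : Option ℕ → ℕ → Prop
  | some a, m => a ≤ m
  | none, m => m = 0

instance (p : Option ℕ) (m : ℕ) : Decidable (pcond p m) := by
  cases p with
  | none => exact inferInstanceAs (Decidable (m = 0))
  | some a => exact inferInstanceAs (Decidable (a ≤ m))

/-- Number of points in quadrant I relative to `(i, σ i)`. -/
def quad1 {n : ℕ} (σ : Equiv.Perm (Fin n)) (i : Fin n) : ℕ :=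
  (Finset.univ.filter (fun j => i < j ∧ σ i < σ j)).card

/-- Number of points in quadrant II relative to `(i, σ i)`. -/
def quad2 {n : ℕ} (σ : Equiv.Perm (Fin n)) (i : Fin n) : ℕ :=
  (Finset.univ.filter (fun j => j < i ∧ σ i < σ j)).card

/-- Number of points in quadrant III relative to `(i, σ i)`. -/
def quad3 {n : ℕ} (σ : Equiv.Perm (Fin n)) (i : Fin n) : ℕ :=
  (Finset.univ.filter (fun j => j < i ∧ σ j < σ i)).card

/-- Number of points in quadrant IV relative to `(i, σ i)`. -/
def quad4 {n : ℕ} (σ : Equiv.Perm (Fin n)) (i : Fin n) : ℕ :=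
  (Finset.univ.filter (fun j => i < j ∧ σ j < σ i)).card

/-- `mmp^{(a,b,c,d)}(σ)`: the number of indices `i` such that `σ i` matches
the simple marked mesh pattern `MMP(a,b,c,d)` in `σ`. -/
def mmp {n : ℕ} (a b c d : Option ℕ) (σ : Equiv.Perm (Fin n)) : ℕ :=
  (Finset.univ.filter (fun i =>
    pcond a (quad1 σ i) ∧ pcond b (quad2 σ i) ∧
    pcond c (quad3 σ i) ∧ pcond d (quad4 σ i))).card

/-- `R_n^{(a,b,c,d)}(x) = Σ_{σ ∈ S_n} x^{mmp^{(a,b,c,d)}(σ)}`. -/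
noncomputable def R (a b c d : Option ℕ) (n : ℕ) : Polynomial ℤ :=
  ∑ σ : Equiv.Perm (Fin n), Polynomial.X ^ mmp a b c d σ

/-! Reverse (`σ * Fin.revPerm`), complement (`Fin.revPerm * σ`) and inverse act on the diagram
of `σ` as reflections of the square, and each permutes the four quadrants around every point;
so each turns `mmp^{(a,b,c,d)}` into `mmp` with permuted parameters and, being a bijection of
`S_n`, fixes `R_n`. These three reflections generate the dihedral group of the square, whose
eight elements give the eight parameter orders. -/

open Finset Equiv

section Quadrants

variable {n : ℕ} (σ : Perm (Fin n)) (i : Fin n)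

lemma quad1_mul_revPerm : quad1 (σ * Fin.revPerm) i = quad2 σ i.rev :=
  card_equiv Fin.revPerm fun j => by simp [Fin.lt_rev_iff]

lemma quad2_mul_revPerm : quad2 (σ * Fin.revPerm) i = quad1 σ i.rev :=
  card_equiv Fin.revPerm fun j => by simp

lemma quad3_mul_revPerm : quad3 (σ * Fin.revPerm) i = quad4 σ i.rev :=
  card_equiv Fin.revPerm fun j => by simp

lemma quad4_mul_revPerm : quad4 (σ * Fin.revPerm) i = quad3 σ i.rev :=
  card_equiv Fin.revPerm fun j => by simp [Fin.lt_rev_iff]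

lemma quad1_revPerm_mul : quad1 (Fin.revPerm * σ) i = quad4 σ i :=
  card_equiv (Equiv.refl _) fun j => by simp

lemma quad2_revPerm_mul : quad2 (Fin.revPerm * σ) i = quad3 σ i :=
  card_equiv (Equiv.refl _) fun j => by simp

lemma quad3_revPerm_mul : quad3 (Fin.revPerm * σ) i = quad2 σ i :=
  card_equiv (Equiv.refl _) fun j => by simp

lemma quad4_revPerm_mul : quad4 (Fin.revPerm * σ) i = quad1 σ i :=
  card_equiv (Equiv.refl _) fun j => by simp

lemma quad1_inv : quad1 σ⁻¹ i = quad1 σ (σ⁻¹ i) :=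
  card_equiv σ⁻¹ fun j => by simp [and_comm]

lemma quad2_inv : quad2 σ⁻¹ i = quad4 σ (σ⁻¹ i) :=
  card_equiv σ⁻¹ fun j => by simp [and_comm]

lemma quad3_inv : quad3 σ⁻¹ i = quad3 σ (σ⁻¹ i) :=
  card_equiv σ⁻¹ fun j => by simp [and_comm]

lemma quad4_inv : quad4 σ⁻¹ i = quad2 σ (σ⁻¹ i) :=
  card_equiv σ⁻¹ fun j => by simp [and_comm]

end Quadrants

section Symmetries

variable {n : ℕ} (a b c d : Option ℕ)

lemma mmp_mul_revPerm (σ : Perm (Fin n)) : mmp a b c d (σ * Fin.revPerm) = mmp b a d c σ :=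
  card_equiv Fin.revPerm fun i => by
    simp only [quad1_mul_revPerm, quad2_mul_revPerm, quad3_mul_revPerm, quad4_mul_revPerm,
      mem_filter, mem_univ, true_and, Fin.revPerm_apply]
    tauto

lemma mmp_revPerm_mul (σ : Perm (Fin n)) : mmp a b c d (Fin.revPerm * σ) = mmp d c b a σ :=
  card_equiv (Equiv.refl _) fun i => by
    simp only [quad1_revPerm_mul, quad2_revPerm_mul, quad3_revPerm_mul, quad4_revPerm_mul,
      mem_filter, mem_univ, true_and, refl_apply]
    tauto

lemma mmp_inv (σ : Perm (Fin n)) : mmp a b c d σ⁻¹ = mmp a d c b σ :=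
  card_equiv σ⁻¹ fun i => by
    simp only [quad1_inv, quad2_inv, quad3_inv, quad4_inv, Perm.coe_inv,
      mem_filter, mem_univ, true_and]
    tauto

end Symmetries

lemma R_eq_of_mmp_comp_equiv {a b c d a' b' c' d' : Option ℕ} {n : ℕ}
    (e : Perm (Fin n) ≃ Perm (Fin n)) (h : ∀ σ, mmp a b c d (e σ) = mmp a' b' c' d' σ) :
    R a b c d n = R a' b' c' d' n :=
  (Fintype.sum_equiv e _ _ fun σ => by rw [h]).symm

lemma R_reverse (a b c d : Option ℕ) (n : ℕ) : R a b c d n = R b a d c n :=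
  R_eq_of_mmp_comp_equiv (Equiv.mulRight Fin.revPerm) (mmp_mul_revPerm a b c d)

lemma R_complement (a b c d : Option ℕ) (n : ℕ) : R a b c d n = R d c b a n :=
  R_eq_of_mmp_comp_equiv (Equiv.mulLeft Fin.revPerm) (mmp_revPerm_mul a b c d)

lemma R_inverse (a b c d : Option ℕ) (n : ℕ) : R a b c d n = R a d c b n :=
  R_eq_of_mmp_comp_equiv (Equiv.inv _) (mmp_inv a b c d)

theorem stmt_0_general (a b c d : Option ℕ) (n : ℕ) :
    R a b c d n = R d a b c n ∧
    R a b c d n = R c b a d n ∧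
    R a b c d n = R b a d c n ∧
    R a b c d n = R d c b a n ∧
    R a b c d n = R a d c b n ∧
    R a b c d n = R c d a b n ∧
    R a b c d n = R b c d a n := by
  refine ⟨?_, ?_, R_reverse a b c d n, R_complement a b c d n, R_inverse a b c d n, ?_, ?_⟩
  · rw [R_inverse a b c d n, R_reverse a d c b n]
  · rw [R_inverse a b c d n, R_complement a d c b n, R_reverse b c d a n]
  · rw [R_complement a b c d n, R_reverse d c b a n]
  · rw [R_inverse a b c d n, R_complement a d c b n]

theorem stmt_0 (a b c d : Option ℕ) (n : ℕ) (hn : 1 ≤ n) :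
    R a b c d n = R d a b c n ∧
    R a b c d n = R c b a d n ∧
    R a b c d n = R b a d c n ∧
    R a b c d n = R d c b a n ∧
    R a b c d n = R a d c b n ∧
    R a b c d n = R c d a b n ∧
    R a b c d n = R b c d a n :=
  stmt_0_general a b c d n
end

section
/- Fix an integer k ≥ 1. Then R_n^{(k,0,0,0)}(x,q) = [n]_q! for all n ≤ k, and for every s ≥ 1, R_{k+s}^{(k,0,0,0)}(x,q) = [k]_q! · Π_{i=1}^{s} ([k]_q + x·q^k·[i]_q). -/
/-- The variable `x` of the two-variable polynomial ring. -/
noncomputable def xv : MvPolynomial (Fin 2) ℤ := MvPolynomial.X 0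

/-- The variable `q` of the two-variable polynomial ring. -/
noncomputable def qv : MvPolynomial (Fin 2) ℤ := MvPolynomial.X 1

/-- `[m]_q = 1 + q + ⋯ + q^{m-1}`. -/
noncomputable def qNat (m : ℕ) : MvPolynomial (Fin 2) ℤ :=
  ∑ i ∈ Finset.range m, qv ^ i

/-- `[m]_q! = [1]_q [2]_q ⋯ [m]_q`, with `[0]_q! = 1`. -/
noncomputable def qFact (m : ℕ) : MvPolynomial (Fin 2) ℤ :=
  ∏ i ∈ Finset.range m, qNat (i + 1)

/-- `mmp^{(k,0,0,0)}(σ)`: the number of indices `i` with at least `k` points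
in quadrant I relative to `(i, σ i)`. -/
def mmpK {n : ℕ} (k : ℕ) (σ : Equiv.Perm (Fin n)) : ℕ :=
  (Finset.univ.filter (fun i => k ≤ quad1 σ i)).card

/-- `coinv(σ)`: the number of pairs `i < j` with `σ i < σ j`. -/
def coinv {n : ℕ} (σ : Equiv.Perm (Fin n)) : ℕ :=
  (Finset.univ.filter (fun p : Fin n × Fin n => p.1 < p.2 ∧ σ p.1 < σ p.2)).card

/-- `R_n^{(k,0,0,0)}(x,q) = Σ_{σ ∈ S_n} x^{mmp^{(k,0,0,0)}(σ)} q^{coinv(σ)}`. -/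
noncomputable def Rq (k n : ℕ) : MvPolynomial (Fin 2) ℤ :=
  ∑ σ : Equiv.Perm (Fin n), xv ^ mmpK k σ * qv ^ coinv σ

/-!
A permutation of `Fin (n+1)` is determined by its first value `v` and the pattern `e` of the
remaining letters. The first letter has `n - v` larger letters to its right, all of them in
quadrant I, and the quadrant-I counts of the other letters are those of `e`. Hence the first
letter contributes the factor `x^[k ≤ n - v] q^(n - v)`, and summing over `v` gives
`R_{n+1} = (Σ_{t ≤ n} x^[k ≤ t] q^t) R_n`.
-/

open Finset Equiv

section Quadrant

variable {n : ℕ}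

theorem coinv_eq_sum_quad1 (σ : Perm (Fin n)) : coinv σ = ∑ i, quad1 σ i := by
  rw [coinv, card_filter, ← univ_product_univ, sum_product]
  simp only [quad1, card_filter]

theorem quad1_zero (σ : Perm (Fin (n + 1))) : quad1 σ 0 = n - σ 0 := by
  have hfilter : univ.filter (fun j => 0 < j ∧ σ 0 < σ j) = univ.filter (fun j => σ 0 < σ j) := by
    refine filter_congr fun j _ => and_iff_right_of_imp fun hj => ?_
    exact Fin.pos_iff_ne_zero.2 fun h => hj.ne (by rw [h])
  rw [quad1, hfilter, card_equiv σ (t := Ioi (σ 0)) (by simp), Fin.card_Ioi]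
  rfl

end Quadrant

section Cons

variable {n : ℕ}

/-- The permutation of `Fin (n+1)` with first value `v` whose remaining letters are in the
relative order given by `e`. -/
def consPerm (v : Fin (n + 1)) (e : Perm (Fin n)) : Perm (Fin (n + 1)) :=
  (finSuccEquiv n).trans (e.optionCongr.trans (finSuccEquiv' v).symm)

@[simp]
theorem consPerm_zero (v : Fin (n + 1)) (e : Perm (Fin n)) : consPerm v e 0 = v := by
  simp [consPerm]

@[simp]
theorem consPerm_succ (v : Fin (n + 1)) (e : Perm (Fin n)) (i : Fin n) :
    consPerm v e i.succ = v.succAbove (e i) := by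
  simp [consPerm, finSuccEquiv'_symm_some]

theorem consPerm_bijective :
    Function.Bijective (fun p : Fin (n + 1) × Perm (Fin n) => consPerm p.1 p.2) := by
  rw [Fintype.bijective_iff_injective_and_card]
  refine ⟨?_, by simp [Fintype.card_perm, Nat.factorial_succ]⟩
  rintro ⟨v, e⟩ ⟨w, f⟩ h
  have hv : v = w := by simpa using congrArg (· 0) h
  subst hv
  have he : e = f := Equiv.ext fun i => by simpa using congrArg (· i.succ) h
  rw [he]

theorem quad1_consPerm_succ (v : Fin (n + 1)) (e : Perm (Fin n)) (i : Fin n) :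
    quad1 (consPerm v e) i.succ = quad1 e i := by
  rw [quad1, quad1, card_filter, card_filter, Fin.sum_univ_succ]
  simp only [consPerm_succ, Fin.not_lt_zero, false_and, if_false, zero_add,
    Fin.succ_lt_succ_iff, Fin.succAbove_lt_succAbove_iff]

theorem mmpK_consPerm (k : ℕ) (v : Fin (n + 1)) (e : Perm (Fin n)) :
    mmpK k (consPerm v e) = (if k ≤ n - v then 1 else 0) + mmpK k e := by
  rw [mmpK, mmpK, card_filter, card_filter, Fin.sum_univ_succ, quad1_zero, consPerm_zero]
  simp only [quad1_consPerm_succ]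

theorem coinv_consPerm (v : Fin (n + 1)) (e : Perm (Fin n)) :
    coinv (consPerm v e) = (n - v) + coinv e := by
  rw [coinv_eq_sum_quad1, coinv_eq_sum_quad1, Fin.sum_univ_succ, quad1_zero, consPerm_zero]
  simp only [quad1_consPerm_succ]

end Cons

noncomputable def firstLetterWeight (k n : ℕ) : MvPolynomial (Fin 2) ℤ :=
  ∑ t ∈ range (n + 1), (if k ≤ t then xv else 1) * qv ^ t

theorem Rq_zero (k : ℕ) : Rq k 0 = 1 := by
  simp [Rq, mmpK, coinv]

theorem Rq_succ (k n : ℕ) : Rq k (n + 1) = firstLetterWeight k n * Rq k n := by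
  set f : ℕ → MvPolynomial (Fin 2) ℤ := fun t => (if k ≤ t then xv else 1) * qv ^ t
  have hweight (v : Fin (n + 1)) (e : Perm (Fin n)) :
      xv ^ mmpK k (consPerm v e) * qv ^ coinv (consPerm v e) =
        f (n - v) * (xv ^ mmpK k e * qv ^ coinv e) := by
    rw [mmpK_consPerm, coinv_consPerm, pow_add, pow_add]
    split_ifs with hle <;> simp [f, hle] <;> ring
  have hfirst : ∑ v : Fin (n + 1), f (n - v) = firstLetterWeight k n := by
    rw [firstLetterWeight, ← Fin.sum_univ_eq_sum_range f, ← Equiv.sum_comp Fin.revPerm]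
    exact sum_congr rfl fun v _ => congrArg f (by simp [Fin.val_rev]; omega)
  rw [Rq, ← Fintype.sum_bijective _ consPerm_bijective _ _ fun _ => rfl, Fintype.sum_prod_type]
  simp only [hweight, ← mul_sum, ← sum_mul, hfirst, Rq]

theorem firstLetterWeight_of_lt {k n : ℕ} (h : n < k) : firstLetterWeight k n = qNat (n + 1) :=
  sum_congr rfl fun t ht => by rw [if_neg (by simp at ht; omega), one_mul]

theorem firstLetterWeight_add (k s : ℕ) :
    firstLetterWeight k (k + s) = qNat k + xv * qv ^ k * qNat (s + 1) := by
  rw [firstLetterWeight, add_assoc, sum_range_add, qNat, qNat, mul_sum]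
  congr 1
  · exact sum_congr rfl fun t ht => by rw [if_neg (by simp at ht; omega), one_mul]
  · exact sum_congr rfl fun t _ => by rw [if_pos (by omega), pow_add]; ring

theorem stmt_7_general (k : ℕ) :
    (∀ n, n ≤ k → Rq k n = qFact n) ∧
    (∀ s, 1 ≤ s → Rq k (k + s) =
      qFact k * ∏ i ∈ Finset.Icc 1 s, (qNat k + xv * qv ^ k * qNat i)) := by
  have hsmall : ∀ n, n ≤ k → Rq k n = qFact n := by
    intro n hn
    induction n with
    | zero => simp [Rq_zero, qFact]
    | succ m ih =>
      rw [Rq_succ, firstLetterWeight_of_lt hn, ih (by omega), qFact, qFact, prod_range_succ,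
        mul_comm]
  have hlarge : ∀ s, Rq k (k + s) =
      qFact k * ∏ i ∈ Icc 1 s, (qNat k + xv * qv ^ k * qNat i) := by
    intro s
    induction s with
    | zero => simp [hsmall k le_rfl]
    | succ s ih =>
      rw [← add_assoc, Rq_succ, firstLetterWeight_add, ih, prod_Icc_succ_top (by omega)]
      ring
  exact ⟨hsmall, fun s _ => hlarge s⟩

theorem stmt_7 (k : ℕ) (hk : 1 ≤ k) :
    (∀ n, n ≤ k → Rq k n = qFact n) ∧
    (∀ s, 1 ≤ s → Rq k (k + s) =
      qFact k * ∏ i ∈ Finset.Icc 1 s, (qNat k + xv * qv ^ k * qNat i)) :=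
  stmt_7_general k
end

section
/- Fix an integer k ≥ 2. For every n ≥ 0, R_{n+1}^{(k≤max,∅,0,0)}(x) = Σ_{i=1}^{n+1} (n+1−i)! · C(n, i−1) · R_{i−1}^{(k−1,∅,0,0)}(x), where R_0^{(k−1,∅,0,0)}(x) = 1 and C(n, i−1) is the binomial coefficient. -/
/-- `mmp^{(k,∅,0,0)}(σ)`: the number of indices `i` with at least `k` points
in quadrant I and exactly 0 points in quadrant II relative to `(i, σ i)`. -/
def mmpKE {n : ℕ} (k : ℕ) (σ : Equiv.Perm (Fin n)) : ℕ :=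
  (Finset.univ.filter (fun i => k ≤ quad1 σ i ∧ quad2 σ i = 0)).card

/-- `R_n^{(k,∅,0,0)}(x) = Σ_{σ ∈ S_n} x^{mmp^{(k,∅,0,0)}(σ)}`. -/
noncomputable def RKE (k n : ℕ) : Polynomial ℤ :=
  ∑ σ : Equiv.Perm (Fin n), Polynomial.X ^ mmpKE k σ

/-- `σ i` matches `MMP(k ≤ max, ∅, 0, 0)` in `σ`: none of the earlier entries
exceeds `σ i`, and, `σ m` being the maximum of the entries after position `i`,
at least `k` of the entries in positions `i+1, …, m` exceed `σ i`. -/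
def kleMatch {n : ℕ} (k : ℕ) (σ : Equiv.Perm (Fin n)) (i : Fin n) : Prop :=
  (∀ j, j < i → σ j < σ i) ∧
  ∃ m, i < m ∧ (∀ j, i < j → σ j ≤ σ m) ∧
    k ≤ (Finset.univ.filter (fun j => i < j ∧ j ≤ m ∧ σ i < σ j)).card

instance {n : ℕ} (k : ℕ) (σ : Equiv.Perm (Fin n)) (i : Fin n) :
    Decidable (kleMatch k σ i) := by
  unfold kleMatch; infer_instance

/-- `mmp^{(k ≤ max, ∅, 0, 0)}(σ)`. -/
def mmpKle {n : ℕ} (k : ℕ) (σ : Equiv.Perm (Fin n)) : ℕ :=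
  (Finset.univ.filter (fun i => kleMatch k σ i)).card

/-- `R_n^{(k ≤ max, ∅, 0, 0)}(x) = Σ_{σ ∈ S_n} x^{mmp^{(k ≤ max,∅,0,0)}(σ)}`. -/
noncomputable def RKle (k n : ℕ) : Polynomial ℤ :=
  ∑ σ : Equiv.Perm (Fin n), Polynomial.X ^ mmpKle k σ

/-!
If the maximum `n + 1` of `σ ∈ S_{n+1}` sits at position `q`, then for every `i < q` the maximum
of the entries after position `i` is at `q`, and `q` itself is one of the entries counted by the
marked mesh pattern. So `σ_i` matches `MMP(k ≤ max, ∅, 0, 0)` iff `i < q`, `σ_i` is a left-to-right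
maximum, and at least `k - 1` larger entries lie strictly between positions `i` and `q`; that is,
`mmp^{(k ≤ max,∅,0,0)}(σ) = mmp^{(k-1,∅,0,0)}(τ)` for the pattern `τ ∈ S_q` of `σ_1 ⋯ σ_q`.
Right multiplication by permutations of the first `q` positions permutes the permutations with
`σ_q = n + 1` and acts on their patterns by right multiplication, so each of the `q!` patterns
occurs `n! / q! = C(n, q) (n - q)!` times. Summing over `q = i - 1` gives the formula.
-/

open Finset Equiv Function Nat

section Pattern

variable {α : Type*} [LinearOrder α] {m : ℕ}

/-- The standardization of `f`: `pattern f i` is the rank of `f i` among the values of `f`. -/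
noncomputable def pattern (f : Fin m → α) : Perm (Fin m) := (Tuple.sort f)⁻¹

theorem pattern_lt_pattern_iff {f : Fin m → α} (hf : Injective f) {i j : Fin m} :
    pattern f i < pattern f j ↔ f i < f j := by
  have hmono : StrictMono (f ∘ Tuple.sort f) :=
    (Tuple.monotone_sort f).strictMono_of_injective (hf.comp (Tuple.sort f).injective)
  simpa [pattern] using (hmono.lt_iff_lt (a := pattern f i) (b := pattern f j)).symm

theorem pattern_comp_perm {f : Fin m → α} (hf : Injective f) (ρ : Perm (Fin m)) :
    pattern (f ∘ ρ) = pattern f * ρ := by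
  have hsort : Tuple.sort (f ∘ ρ) = ρ⁻¹ * Tuple.sort f := by
    refine (Tuple.eq_sort_iff.mpr ⟨?_, fun i j hij h => ?_⟩).symm
    · simpa [comp_def] using Tuple.monotone_sort f
    · exact absurd ((hf.comp ρ.injective).comp (ρ⁻¹ * Tuple.sort f).injective h) hij.ne
  simp [pattern, hsort]

theorem quad1_pattern {f : Fin m → α} (hf : Injective f) (i : Fin m) :
    quad1 (pattern f) i = #{j | i < j ∧ f i < f j} := by
  simp only [quad1, pattern_lt_pattern_iff hf]

theorem quad2_pattern_eq_zero_iff {f : Fin m → α} (hf : Injective f) (i : Fin m) :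
    quad2 (pattern f) i = 0 ↔ ∀ j < i, f j < f i := by
  simp only [quad2, pattern_lt_pattern_iff hf, Finset.card_eq_zero, filter_eq_empty_iff, mem_univ,
    true_implies, not_and, not_lt]
  exact forall₂_congr fun j hj => le_iff_lt_or_eq.trans (or_iff_left (hf.ne hj.ne))

theorem mmpKE_pattern {f : Fin m → α} (hf : Injective f) (k : ℕ) :
    mmpKE k (pattern f) = #{i | k ≤ #{j | i < j ∧ f i < f j} ∧ ∀ j < i, f j < f i} := by
  simp only [mmpKE, quad1_pattern hf, quad2_pattern_eq_zero_iff hf]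

end Pattern

theorem card_mul_card_filter_perm_apply_eq {α : Type*} [Fintype α] [DecidableEq α] (a b : α) :
    Fintype.card α * #{σ : Perm α | σ a = b} = (Fintype.card α)! := by
  have hconst : ∀ y, #{σ : Perm α | σ a = y} = #{σ : Perm α | σ a = b} := fun y =>
    card_equiv (Equiv.mulLeft (swap y b)) (by simp [swap_apply_eq_iff])
  calc Fintype.card α * #{σ : Perm α | σ a = b} = ∑ y, #{σ : Perm α | σ a = y} := by
        simp [hconst]
    _ = (Fintype.card α)! := by
        rw [← card_eq_sum_card_fiberwise fun _ _ => mem_univ _, Finset.card_univ, Fintype.card_perm]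

section PrefixPattern

variable {N q : ℕ}

noncomputable def prefixPattern (σ : Perm (Fin N)) (hq : q ≤ N) : Perm (Fin q) :=
  pattern (σ ∘ Fin.castLE hq)

theorem prefixPattern_mul_extendDomain (σ : Perm (Fin N)) (hq : q ≤ N) (ρ : Perm (Fin q)) :
    prefixPattern (σ * ρ.extendDomain (Fin.castLEquiv hq)) hq = prefixPattern σ hq * ρ := by
  have hcomp : (σ * ρ.extendDomain (Fin.castLEquiv hq)) ∘ Fin.castLE hq
      = (σ ∘ Fin.castLE hq) ∘ ρ := by
    funext i
    simpa using congrArg σ (Perm.extendDomain_apply_image ρ (Fin.castLEquiv hq) i)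
  rw [prefixPattern, hcomp, pattern_comp_perm (σ.injective.comp (Fin.castLE_injective hq))]
  rfl

end PrefixPattern

section Counting

variable {n : ℕ}

theorem card_filter_apply_eq_and_prefixPattern_eq (q v : Fin (n + 1)) (τ : Perm (Fin q)) :
    #{σ : Perm (Fin (n + 1)) | σ q = v ∧ prefixPattern σ q.isLt.le = τ}
      = n.choose q * (n - q)! := by
  have hconst : ∀ τ : Perm (Fin q),
      #{σ : Perm (Fin (n + 1)) | σ q = v ∧ prefixPattern σ q.isLt.le = τ}
        = #{σ : Perm (Fin (n + 1)) | σ q = v ∧ prefixPattern σ q.isLt.le = 1} := fun τ => by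
    have hfix : τ.extendDomain (Fin.castLEquiv q.isLt.le) q = q :=
      Perm.extendDomain_apply_not_subtype _ _ (lt_irrefl (q : ℕ))
    exact (card_equiv (Equiv.mulRight (τ.extendDomain (Fin.castLEquiv q.isLt.le))) fun σ => by
      simp [prefixPattern_mul_extendDomain, hfix]).symm
  have hstab : (n + 1) * #{σ : Perm (Fin (n + 1)) | σ q = v} = (n + 1)! := by
    simpa using card_mul_card_filter_perm_apply_eq q v
  have htotal : (q : ℕ)! * #{σ : Perm (Fin (n + 1)) | σ q = v ∧ prefixPattern σ q.isLt.le = 1}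
      = n ! := by
    calc _ = ∑ τ : Perm (Fin q),
            #{σ : Perm (Fin (n + 1)) | σ q = v ∧ prefixPattern σ q.isLt.le = τ} := by
          simp [hconst, Fintype.card_perm]
      _ = #{σ : Perm (Fin (n + 1)) | σ q = v} := by
          rw [card_eq_sum_card_fiberwise fun σ _ => mem_univ (prefixPattern σ q.isLt.le)]
          simp only [filter_filter]
      _ = n ! := Nat.eq_of_mul_eq_mul_left n.succ_pos (by rw [hstab, Nat.factorial_succ])
  rw [hconst]
  apply Nat.eq_of_mul_eq_mul_left (Nat.factorial_pos q)
  rw [htotal, ← Nat.choose_mul_factorial_mul_factorial q.is_le]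
  ring

theorem sum_filter_apply_eq_prefixPattern {M : Type*} [AddCommMonoid M] (q v : Fin (n + 1))
    (H : Perm (Fin q) → M) :
    ∑ σ : Perm (Fin (n + 1)) with σ q = v, H (prefixPattern σ q.isLt.le)
      = (n.choose q * (n - q)!) • ∑ τ, H τ := by
  rw [← sum_fiberwise _ (prefixPattern · q.isLt.le), smul_sum]
  refine sum_congr rfl fun τ _ => ?_
  rw [sum_congr rfl fun σ hσ => by rw [(mem_filter.mp hσ).2], sum_const, filter_filter,
    card_filter_apply_eq_and_prefixPattern_eq]

end Counting

section Transport

variable {N q : ℕ} (hq : q ≤ N)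

theorem card_filter_castLE (P : Fin N → Prop) [DecidablePred P] :
    #{j : Fin q | P (Fin.castLE hq j)} = #{j : Fin N | (j : ℕ) < q ∧ P j} := by
  rw [← card_map (Fin.castLEEmb hq)]
  congr 1
  ext j
  simp only [mem_map, mem_filter, mem_univ, true_and, Fin.castLEEmb_apply]
  constructor
  · rintro ⟨a, ha, rfl⟩
    exact ⟨a.isLt, ha⟩
  · rintro ⟨hj, hP⟩
    exact ⟨⟨j, hj⟩, hP, rfl⟩

theorem forall_lt_castLE_iff (P : Fin N → Prop) (a : Fin q) :
    (∀ j < Fin.castLE hq a, P j) ↔ ∀ j < a, P (Fin.castLE hq j) := by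
  refine ⟨fun h j hj => h _ (by simpa using hj), fun h j hj => ?_⟩
  have hjq : (j : ℕ) < q := lt_trans (Fin.lt_def.mp hj) a.isLt
  exact h ⟨j, hjq⟩ (Fin.lt_def.mpr (Fin.lt_def.mp hj))

end Transport

section MaximumAt

variable {n k : ℕ} {σ : Perm (Fin (n + 1))} {q : Fin (n + 1)}

theorem kleMatch_iff_of_apply_eq_last (hk : 1 ≤ k) (hσ : σ q = Fin.last n) (i : Fin (n + 1)) :
    kleMatch k σ i ↔
      i < q ∧ k - 1 ≤ #{j | i < j ∧ j < q ∧ σ i < σ j} ∧ ∀ j < i, σ j < σ i := by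
  have hle : ∀ j, σ j ≤ σ q := fun j => hσ ▸ Fin.le_last _
  have hcount (hiq : i < q) :
      #{j | i < j ∧ j ≤ q ∧ σ i < σ j} = #{j | i < j ∧ j < q ∧ σ i < σ j} + 1 := by
    rw [← card_insert_of_notMem (a := q) (by simp)]
    congr 1
    ext j
    simp only [mem_filter, mem_univ, true_and, mem_insert, le_iff_lt_or_eq]
    constructor
    · rintro ⟨hij, hjq | rfl, hσij⟩
      exacts [Or.inr ⟨hij, hjq, hσij⟩, Or.inl rfl]
    · rintro (rfl | ⟨hij, hjq, hσij⟩)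
      exacts [⟨hiq, Or.inr rfl, lt_of_le_of_ne (hle i) (σ.injective.ne hiq.ne)⟩,
        ⟨hij, Or.inl hjq, hσij⟩]
  constructor
  · rintro ⟨hleft, m, him, hmax, hcard⟩
    have hiq : i < q := by
      refine lt_of_le_of_ne (not_lt.mp fun hqi => (hleft q hqi).not_ge (hle i)) fun hiq => ?_
      subst hiq
      have hempty : #{j | i < j ∧ j ≤ m ∧ σ i < σ j} = 0 :=
        Finset.card_eq_zero.mpr (filter_eq_empty_iff.mpr fun j _ h => h.2.2.not_ge (hle j))
      omega
    obtain rfl : m = q := σ.injective (le_antisymm (hle m) (hmax q hiq))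
    rw [hcount hiq] at hcard
    exact ⟨hiq, by omega, hleft⟩
  · rintro ⟨hiq, hcard, hleft⟩
    refine ⟨hleft, q, hiq, fun j _ => hle j, ?_⟩
    rw [hcount hiq]
    omega

theorem mmpKle_eq_mmpKE_prefixPattern (hk : 1 ≤ k) (hσ : σ q = Fin.last n) :
    mmpKle k σ = mmpKE (k - 1) (prefixPattern σ q.isLt.le) := by
  rw [prefixPattern, mmpKE_pattern (σ.injective.comp (Fin.castLE_injective _)), mmpKle,
    ← card_map (Fin.castLEEmb q.isLt.le)]
  congr 1
  ext i
  simp only [mem_map, mem_filter, mem_univ, true_and, Fin.castLEEmb_apply,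
    kleMatch_iff_of_apply_eq_last hk hσ, comp_apply]
  have hcount (a : Fin q) :
      #{j | a < j ∧ σ (Fin.castLE q.isLt.le a) < σ (Fin.castLE q.isLt.le j)}
        = #{j | Fin.castLE q.isLt.le a < j ∧ j < q ∧ σ (Fin.castLE q.isLt.le a) < σ j} := by
    convert card_filter_castLE q.isLt.le
      (fun j => Fin.castLE q.isLt.le a < j ∧ σ (Fin.castLE q.isLt.le a) < σ j) using 3
    · simp
    · simp only [Fin.lt_def]
      exact and_left_comm
  constructor
  · rintro ⟨hiq, hcard, hleft⟩
    refine ⟨⟨i, hiq⟩, ⟨?_, ?_⟩, rfl⟩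
    · rwa [hcount]
    · exact (forall_lt_castLE_iff _ (fun j => σ j < σ i) _).mp hleft
  · rintro ⟨a, ⟨hcard, hleft⟩, rfl⟩
    exact ⟨a.isLt, by rwa [← hcount], (forall_lt_castLE_iff _ (fun j => σ j < σ _) _).mpr hleft⟩

end MaximumAt

theorem stmt_9 (k : ℕ) (hk : 2 ≤ k) (n : ℕ) :
    RKle k (n + 1) =
      ∑ i ∈ Finset.Icc 1 (n + 1),
        ((Nat.factorial (n + 1 - i) * Nat.choose n (i - 1) : ℕ) : Polynomial ℤ) *
          RKE (k - 1) (i - 1) := by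
  have hsplit : RKle k (n + 1) = ∑ q : Fin (n + 1), (n.choose q * (n - q)!) • RKE (k - 1) q := by
    rw [RKle, ← sum_fiberwise univ fun σ : Perm (Fin (n + 1)) => σ⁻¹ (Fin.last n)]
    refine sum_congr rfl fun q _ => ?_
    simp only [Perm.inv_eq_iff_eq, eq_comm (a := Fin.last n)]
    rw [sum_congr rfl fun σ hσ => by
      rw [mmpKle_eq_mmpKE_prefixPattern (by omega) (mem_filter.mp hσ).2]]
    exact sum_filter_apply_eq_prefixPattern q _ (fun τ => Polynomial.X ^ mmpKE (k - 1) τ)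
  rw [hsplit, Fin.sum_univ_eq_sum_range (fun q => (n.choose q * (n - q)!) • RKE (k - 1) q),
    range_eq_Ico, ← Ico_add_one_right_eq_Icc, ← sum_Ico_add' _ 0 (n + 1) 1]
  refine sum_congr rfl fun q _ => ?_
  rw [nsmul_eq_mul, Nat.add_sub_cancel, Nat.add_sub_add_right, mul_comm (n.choose q)]
end

section
/- Fix an integer k ≥ 1. For every n ≥ k+1, the coefficient of x^{n−k} in R_n^{(k≤max,∅,0,0)}(x) equals (k−1)!. -/
open Finset Polynomial

/-! A match at position `i` needs `k` later entries, so only the positions `i < n - k` can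
match, and the coefficient of `x^(n-k)` counts the permutations in which all of them do. The
match at `n - k - 1` then has no room to spare: every later entry exceeds `σ (n - k - 1)`, and
the maximum of the suffix sits in the last position. With the left-to-right maxima this forces
`σ` to fix the first `n - k` positions and the last one; conversely every such permutation
works, and these are the `(k - 1)!` permutations of the block `n - k, …, n - 2`. -/

theorem Fin.card_filter_le_val_and_val_lt {n lo hi : ℕ} (hhi : hi ≤ n) :
    #{a : Fin n | lo ≤ a.val ∧ a.val < hi} = hi - lo := by
  rw [← Nat.card_Ico lo hi, ← card_map Fin.valEmbedding]
  congr 1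
  ext x
  simp only [mem_map, mem_filter, mem_univ, true_and, Fin.valEmbedding_apply, mem_Ico]
  exact ⟨fun ⟨a, ha, hax⟩ => hax ▸ ha, fun hx => ⟨⟨x, by omega⟩, hx, rfl⟩⟩

namespace Equiv.Perm

theorem apply_eq_self_of_lt_of_lt {n : ℕ} (σ : Perm (Fin n)) {i : Fin n}
    (hlt : ∀ j < i, σ j < σ i) (hgt : ∀ j, i < j → σ i < σ j) : σ i = i := by
  have hmap : (Iio i).map σ.toEmbedding = Iio (σ i) := by
    ext y
    obtain ⟨j, rfl⟩ := σ.surjective y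
    simp only [mem_map_equiv, mem_Iio, symm_apply_apply]
    refine ⟨hlt j, fun hj => lt_of_not_ge fun hij => ?_⟩
    rcases hij.lt_or_eq with hij | rfl
    · exact (hgt j hij).not_gt hj
    · exact hj.false
  have := congrArg card hmap
  rw [card_map, Fin.card_Iio, Fin.card_Iio] at this
  exact Fin.ext this.symm

theorem card_filter_forall_not_imp_apply_eq {α : Type*} [Fintype α] [DecidableEq α]
    (p : α → Prop) [DecidablePred p] :
    #{σ : Perm α | ∀ a, ¬p a → σ a = a} = (Fintype.card {a // p a}).factorial := by
  rw [← Fintype.card_subtype, ← Fintype.card_perm]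
  exact Fintype.card_congr (Perm.subtypeEquivSubtypePerm p).symm

end Equiv.Perm

section kleMatch

variable {n k : ℕ} {σ : Equiv.Perm (Fin n)} {i : Fin n}

theorem kleMatch.val_add_lt (h : kleMatch k σ i) : i.val + k < n := by
  obtain ⟨-, m, him, -, hcard⟩ := h
  have hsub : univ.filter (fun j => i < j ∧ j ≤ m ∧ σ i < σ j) ⊆ Ioi i := fun j hj => by
    simpa using (mem_filter.1 hj).2.1
  have := hcard.trans (card_le_card hsub)
  rw [Fin.card_Ioi] at this
  have := m.isLt
  have : i.val < m.val := him
  omega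

theorem mmpKle_eq_sub_iff (hkn : k ≤ n) :
    mmpKle k σ = n - k ↔ ∀ i : Fin n, i.val < n - k → kleMatch k σ i := by
  have hsub : univ.filter (kleMatch k σ) ⊆ univ.filter (fun i : Fin n => i.val < n - k) :=
    fun i hi => by
      have := (mem_filter.1 hi).2.val_add_lt
      simp only [mem_filter, mem_univ, true_and]
      omega
  have hcard : #(univ.filter fun i : Fin n => i.val < n - k) = n - k := by
    rw [Fin.card_filter_val_lt]; omega
  rw [mmpKle]
  nth_rw 1 [← hcard]
  rw [le_antisymm_iff, and_iff_right (card_le_card hsub),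
    eq_iff_card_le_of_subset hsub, Subset.antisymm_iff, and_iff_right hsub]
  simp [subset_iff]

theorem kleMatch.forall_lt_apply_and_exists_max (h : kleMatch k σ i)
    (hi : n ≤ i.val + k + 1) :
    (∀ j, i < j → σ i < σ j) ∧ ∃ m : Fin n, m.val = n - 1 ∧ ∀ j, σ j ≤ σ m := by
  obtain ⟨hleft, m, him, hmax, hcard⟩ := h
  have hsub : univ.filter (fun j => i < j ∧ j ≤ m ∧ σ i < σ j) ⊆ Ioi i := fun j hj => by
    simpa using (mem_filter.1 hj).2.1
  have heq := eq_of_subset_of_card_le hsub (by rw [Fin.card_Ioi]; omega)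
  have hlater : ∀ j, i < j → j ≤ m ∧ σ i < σ j := fun j hj =>
    (mem_filter.1 (heq ▸ mem_Ioi.2 hj)).2.2
  have him' : i.val < m.val := him
  refine ⟨fun j hj => (hlater j hj).2, m, ?_, fun j => ?_⟩
  · have : (⟨n - 1, by omega⟩ : Fin n) ≤ m := (hlater _ (by simp only [Fin.lt_def]; omega)).1
    simp only [Fin.le_def] at this
    omega
  · rcases lt_or_ge i j with hij | hji
    · exact hmax j hij
    · have hσj : σ j ≤ σ i := by
        rcases hji.lt_or_eq with hji | rfl
        · exact (hleft j hji).le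
        · exact le_rfl
      exact (hσj.trans_lt (hlater m him).2).le

theorem apply_eq_self_of_forall_kleMatch (hkn : k < n)
    (h : ∀ i : Fin n, i.val < n - k → kleMatch k σ i) (a : Fin n)
    (ha : ¬(n - k ≤ a.val ∧ a.val < n - 1)) : σ a = a := by
  set i₀ : Fin n := ⟨n - k - 1, by omega⟩
  have hi₀ : i₀.val = n - k - 1 := rfl
  obtain ⟨hlater, m, hm, hmax⟩ :=
    (h i₀ (by omega)).forall_lt_apply_and_exists_max (by omega)
  by_cases hak : a.val < n - k
  · refine σ.apply_eq_self_of_lt_of_lt (h a hak).1 fun j hj => ?_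
    by_cases hjk : j.val < n - k
    · exact (h j hjk).1 a hj
    · have hσa : σ a ≤ σ i₀ := by
        rcases (show a ≤ i₀ by simp only [Fin.le_def]; omega).lt_or_eq with ha₀ | rfl
        · exact ((h i₀ (by omega)).1 a ha₀).le
        · exact le_rfl
      exact hσa.trans_lt (hlater j (by simp only [Fin.lt_def]; omega))
  · obtain rfl : a = m := Fin.ext (by omega)
    refine σ.apply_eq_self_of_lt_of_lt (fun j hj => (hmax j).lt_of_ne (σ.injective.ne hj.ne))
      fun j hj => absurd hj (not_lt.2 (by simp only [Fin.le_def]; omega))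

theorem kleMatch_of_forall_apply_eq_self (hk : 1 ≤ k)
    (h : ∀ a : Fin n, ¬(n - k ≤ a.val ∧ a.val < n - 1) → σ a = a) (i : Fin n)
    (hi : i.val < n - k) : kleMatch k σ i := by
  have hσi : σ i = i := h i (by omega)
  set m : Fin n := ⟨n - 1, by omega⟩
  have hσm : σ m = m := h m (by simp [m])
  have hsuffix : ∀ j : Fin n, n - k ≤ j.val → n - k ≤ (σ j).val := fun j hj => by
    by_contra! hσj
    have := σ.injective (h (σ j) (by omega))
    omega
  refine ⟨fun j hj => ?_, m, ?_, fun j _ => ?_, ?_⟩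
  · rw [hσi, h j (by simp only [Fin.lt_def] at hj; omega)]
    exact hj
  · simp only [Fin.lt_def, m]; omega
  · rw [hσm, Fin.le_def]; have := (σ j).isLt; simp only [m]; omega
  · calc k = #{j : Fin n | n - k ≤ j.val ∧ j.val < n} := by
          rw [Fin.card_filter_le_val_and_val_lt le_rfl]; omega
      _ ≤ _ := card_le_card fun j hj => by
          simp only [mem_filter, mem_univ, true_and] at hj ⊢
          have := hsuffix j hj.1
          rw [hσi]
          simp only [Fin.lt_def, Fin.le_def, m]
          omega

end kleMatch

theorem stmt_10 (k : ℕ) (hk : 1 ≤ k) (n : ℕ) (hn : k + 1 ≤ n) :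
    (RKle k n).coeff (n - k) = ((Nat.factorial (k - 1) : ℕ) : ℤ) := by
  have hblock : Fintype.card {a : Fin n // n - k ≤ a.val ∧ a.val < n - 1} = k - 1 := by
    rw [Fintype.card_subtype, Fin.card_filter_le_val_and_val_lt (by omega)]
    omega
  simp only [RKle, finsetSum_coeff, coeff_X_pow, sum_boole]
  rw [← hblock, ← Equiv.Perm.card_filter_forall_not_imp_apply_eq]
  congr 2
  ext σ
  simp only [mem_filter, mem_univ, true_and, eq_comm (a := n - k),
    mmpKle_eq_sub_iff (by omega : k ≤ n)]
  exact ⟨apply_eq_self_of_forall_kleMatch (by omega), kleMatch_of_forall_apply_eq_self hk⟩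
end

section
/- For every n ≥ 3, the number of permutations σ ∈ S_n with mmp^{(2≤max,∅,0,0)}(σ) = 1 equals c(n,3), the number of permutations in S_n with exactly 3 cycles; that is, the coefficient of x in R_n^{(2≤max,∅,0,0)}(x) is c(n,3). -/
/-- The number of cycles of `σ` (fixed points count as cycles). -/
def numCycles {n : ℕ} (σ : Equiv.Perm (Fin n)) : ℕ :=
  Multiset.card σ.cycleType + (Finset.univ.filter (fun x => σ x = x)).card

/-!
An index `i` matches `MMP(2 ≤ max, ∅, 0, 0)` exactly when `σ i` is a left-to-right maximum
followed by at least two further left-to-right maxima, so the statistic is the number of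
left-to-right maxima minus two. Left-to-right maxima and cycles are both distributed by the
Stirling numbers `c(n, k)`: a permutation of `n + 1` letters arises in exactly one way by
inserting a new least letter `0` into a permutation of `n` letters, in one of `n + 1` places
(into the word, or into the cycles via `decomposeFin`). The insertion creates a new left-to-right
maximum (resp. a new cycle) in exactly one of those places and otherwise keeps the old ones,
which is the recursion `c(n + 1, k) = n c(n, k) + c(n, k - 1)`.
-/

open Equiv Finset

theorem Finset.card_filter_le_card_filter_lt {α : Type*} [LinearOrder α] (S : Finset α) (k : ℕ) :
    #{i ∈ S | k ≤ #{j ∈ S | i < j}} = #S - k := by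
  induction S using Finset.induction_on_max generalizing k with
  | empty => simp
  | insert a S ha ih =>
    cases k with
    | zero => simp
    | succ k =>
      have haS : a ∉ S := fun h => (ha a h).false
      have above_a : {j ∈ insert a S | a < j} = ∅ :=
        filter_eq_empty_iff.2 fun j hj => by
          rcases mem_insert.1 hj with rfl | hj
          exacts [lt_irrefl j, (ha j hj).not_gt]
      have above_i : ∀ i ∈ S, {j ∈ insert a S | i < j} = insert a {j ∈ S | i < j} :=
        fun i hi => by rw [filter_insert, if_pos (ha i hi)]
      rw [filter_insert, if_neg (by simp [above_a]), card_insert_of_notMem haS,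
        filter_congr fun i hi => by
          rw [above_i i hi, card_insert_of_notMem (by simp [haS]), Nat.add_le_add_iff_right],
        ih]
      omega

theorem Fin.card_eq_ite_add_card_succAbove {n : ℕ} (S : Finset (Fin (n + 1))) (q : Fin (n + 1)) :
    #S = (if q ∈ S then 1 else 0) + #{x | q.succAbove x ∈ S} := by
  rw [← filter_univ_mem S, card_filter, card_filter, Fin.sum_univ_succAbove _ q]
  simp

theorem Equiv.Perm.SameCycle.map_of_forall_sameCycle_apply {α β : Type*} [Finite α]
    {τ : Perm α} {e : Perm β} (f : α → β) (hf : ∀ a, e.SameCycle (f a) (f (τ a))) {a b : α}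
    (h : τ.SameCycle a b) : e.SameCycle (f a) (f b) := by
  obtain ⟨i, rfl⟩ := h.exists_nat_pow_eq
  clear h
  induction i generalizing a with
  | zero => exact Perm.SameCycle.refl _ _
  | succ i ih => simpa only [pow_succ, Perm.mul_apply] using (hf a).trans (ih (a := τ a))

theorem card_filter_eq_stirlingFirst (s : (n : ℕ) → Perm (Fin n) → ℕ)
    (ins : (n : ℕ) → Fin (n + 1) × Perm (Fin n) ≃ Perm (Fin (n + 1))) (hs₀ : s 0 1 = 0)
    (hs : ∀ n q e, s (n + 1) (ins n (q, e)) = s n e + if q = 0 then 1 else 0) (n k : ℕ) :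
    #{σ | s n σ = k} = Nat.stirlingFirst n k := by
  induction n generalizing k with
  | zero =>
    have hs₀' (σ : Perm (Fin 0)) : s 0 σ = 0 := by rw [Subsingleton.elim σ 1, hs₀]
    cases k <;> simp [hs₀']
  | succ n ih =>
    have hsplit : #{σ | s (n + 1) σ = k} = #{e | s n e + 1 = k} + n * #{e | s n e = k} := by
      simp only [card_filter]
      rw [← (ins n).sum_comp, Fintype.sum_prod_type, Fin.sum_univ_succ]
      simp [hs, Fin.succ_ne_zero]
    rw [hsplit]
    cases k with
    | zero => cases n <;> simp [ih]
    | succ k => simp [ih, Nat.stirlingFirst_succ_succ, add_comm]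

def leftToRightMaxima {ι α : Type*} [Fintype ι] [LinearOrder ι] [LinearOrder α] (w : ι → α) :
    Finset ι :=
  {i | ∀ j < i, w j < w i}

theorem mem_leftToRightMaxima {ι α : Type*} [Fintype ι] [LinearOrder ι] [LinearOrder α]
    {w : ι → α} {i : ι} : i ∈ leftToRightMaxima w ↔ ∀ j < i, w j < w i := by
  simp [leftToRightMaxima]

section kleMatch

variable {n : ℕ} {σ : Perm (Fin n)} {i j : Fin n}

theorem mem_leftToRightMaxima_of_lt (hi : i ∈ leftToRightMaxima σ) (hij : i < j)
    (hlt : σ i < σ j) (hmax : ∀ l ∈ Ioo i j, σ l ≤ σ j) : j ∈ leftToRightMaxima σ := by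
  refine mem_leftToRightMaxima.2 fun l hl => ?_
  rcases lt_trichotomy l i with hli | rfl | hil
  · exact (mem_leftToRightMaxima.1 hi l hli).trans hlt
  · exact hlt
  · exact (hmax l (mem_Ioo.2 ⟨hil, hl⟩)).lt_of_ne (σ.injective.ne hl.ne)

theorem one_lt_card_leftToRightMaxima_of_kleMatch (h : kleMatch 2 σ i) :
    1 < #{j ∈ leftToRightMaxima σ | i < j} := by
  obtain ⟨hi, m, him, hmax, hcard⟩ := h
  have hi : i ∈ leftToRightMaxima σ := mem_leftToRightMaxima.2 hi
  obtain ⟨w, hw, hwm⟩ := (one_lt_card_iff_nontrivial.1 hcard).exists_ne m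
  simp only [mem_filter, mem_univ, true_and] at hw
  have hw' : w ∈ Ioo i m := mem_Ioo.2 ⟨hw.1, hw.2.1.lt_of_ne hwm⟩
  obtain ⟨l, hl, hlmax⟩ := exists_max_image (Ioo i m) σ ⟨w, hw'⟩
  have hl' := mem_Ioo.1 hl
  have hil : σ i < σ l := hw.2.2.trans_le (hlmax w hw')
  have hm : m ∈ leftToRightMaxima σ := mem_leftToRightMaxima_of_lt hi him
    (hil.trans_le (hmax l hl'.1)) fun l hl => hmax l (mem_Ioo.1 hl).1
  have hl : l ∈ leftToRightMaxima σ := mem_leftToRightMaxima_of_lt hi hl'.1 hil fun l' hl'' =>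
    hlmax l' (Ioo_subset_Ioo_right hl'.2.le hl'')
  exact one_lt_card.2 ⟨l, by simp [hl, hl'.1], m, by simp [hm, him], hl'.2.ne⟩

theorem kleMatch_two_of_one_lt_card (hi : i ∈ leftToRightMaxima σ)
    (h : 1 < #{j ∈ leftToRightMaxima σ | i < j}) : kleMatch 2 σ i := by
  obtain ⟨j₁, hj₁, j₂, hj₂, hne⟩ := one_lt_card.1 h
  simp only [mem_filter] at hj₁ hj₂
  obtain ⟨m, hm, hmax⟩ := exists_max_image {j | i < j} σ ⟨j₁, by simp [hj₁.2]⟩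
  simp only [mem_filter, mem_univ, true_and] at hm hmax
  have mem_of_record : ∀ j ∈ leftToRightMaxima σ, i < j →
      j ∈ ({j | i < j ∧ j ≤ m ∧ σ i < σ j} : Finset (Fin n)) := fun j hj hij => by
    have hlt := mem_leftToRightMaxima.1 hj
    simp only [mem_filter, mem_univ, true_and]
    exact ⟨hij, not_lt.1 fun hmj => (hlt m hmj).not_ge (hmax j hij), hlt i hij⟩
  refine ⟨mem_leftToRightMaxima.1 hi, m, hm, hmax, ?_⟩
  exact one_lt_card.2 ⟨j₁, mem_of_record j₁ hj₁.1 hj₁.2, j₂, mem_of_record j₂ hj₂.1 hj₂.2, hne⟩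

theorem kleMatch_two_iff :
    kleMatch 2 σ i ↔ i ∈ leftToRightMaxima σ ∧ 2 ≤ #{j ∈ leftToRightMaxima σ | i < j} :=
  ⟨fun h => ⟨mem_leftToRightMaxima.2 h.1, one_lt_card_leftToRightMaxima_of_kleMatch h⟩,
    fun h => kleMatch_two_of_one_lt_card h.1 h.2⟩

theorem mmpKle_two_eq (σ : Perm (Fin n)) : mmpKle 2 σ = #(leftToRightMaxima σ) - 2 := by
  have : ({i | kleMatch 2 σ i} : Finset (Fin n)) =
      {i ∈ leftToRightMaxima σ | 2 ≤ #{j ∈ leftToRightMaxima σ | i < j}} := by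
    ext i
    simp [kleMatch_two_iff]
  rw [mmpKle, this, card_filter_le_card_filter_lt]

theorem mmpKle_two_eq_one_iff (σ : Perm (Fin n)) : mmpKle 2 σ = 1 ↔ #(leftToRightMaxima σ) = 3 := by
  rw [mmpKle_two_eq]
  omega

end kleMatch

section insertMin

variable {n : ℕ}

/-- The word of `e`, shifted up by one, with the new least value `0` inserted at position `q`. -/
def insertMin (q : Fin (n + 1)) (e : Perm (Fin n)) : Perm (Fin (n + 1)) :=
  (finSuccEquiv' q).trans (e.optionCongr.trans (finSuccEquiv n).symm)

@[simp]
theorem insertMin_apply_self (q : Fin (n + 1)) (e : Perm (Fin n)) : insertMin q e q = 0 := by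
  simp [insertMin]

@[simp]
theorem insertMin_apply_succAbove (q : Fin (n + 1)) (e : Perm (Fin n)) (x : Fin n) :
    insertMin q e (q.succAbove x) = (e x).succ := by
  simp [insertMin]

theorem insertMin_injective :
    Function.Injective fun p : Fin (n + 1) × Perm (Fin n) => insertMin p.1 p.2 := by
  rintro ⟨q, e⟩ ⟨q', e'⟩ h
  simp only at h
  obtain rfl : q = q' := (insertMin q e).injective <| by
    rw [insertMin_apply_self, h, insertMin_apply_self]
  have he : e = e' := Equiv.ext fun x => Fin.succ_injective _ <| by
    rw [← insertMin_apply_succAbove q, ← insertMin_apply_succAbove q, h]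
  rw [he]

noncomputable def insertMinEquiv (n : ℕ) : Fin (n + 1) × Perm (Fin n) ≃ Perm (Fin (n + 1)) :=
  Equiv.ofBijective _ <| (Fintype.bijective_iff_injective_and_card _).2
    ⟨insertMin_injective, by simp [Fintype.card_perm, Nat.factorial_succ]⟩

theorem self_mem_leftToRightMaxima_insertMin_iff (q : Fin (n + 1)) (e : Perm (Fin n)) :
    q ∈ leftToRightMaxima (insertMin q e) ↔ q = 0 := by
  rw [mem_leftToRightMaxima]
  refine ⟨fun h => by_contra fun hq => ?_, fun hq j hj => absurd (hq ▸ hj) (Fin.not_lt_zero j)⟩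
  obtain ⟨z, hz⟩ := Fin.exists_succAbove_eq (Ne.symm hq)
  have := h (q.succAbove z) (hz ▸ Fin.pos_of_ne_zero hq)
  simp at this

theorem succAbove_mem_leftToRightMaxima_insertMin_iff (q : Fin (n + 1)) (e : Perm (Fin n))
    (x : Fin n) : q.succAbove x ∈ leftToRightMaxima (insertMin q e) ↔ x ∈ leftToRightMaxima e := by
  simp [mem_leftToRightMaxima, Fin.forall_iff_succAbove q]

theorem card_leftToRightMaxima_insertMin (q : Fin (n + 1)) (e : Perm (Fin n)) :
    #(leftToRightMaxima (insertMin q e)) = #(leftToRightMaxima e) + if q = 0 then 1 else 0 := by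
  rw [Fin.card_eq_ite_add_card_succAbove _ q, add_comm]
  simp only [self_mem_leftToRightMaxima_insertMin_iff,
    succAbove_mem_leftToRightMaxima_insertMin_iff, filter_univ_mem]

end insertMin

namespace Equiv.Perm

section cycleMaxima

variable {α : Type*} [Fintype α] [LinearOrder α]

def cycleMaxima (σ : Perm α) : Finset α :=
  {x | ∀ y, σ.SameCycle x y → y ≤ x}

theorem mem_cycleMaxima {σ : Perm α} {x : α} :
    x ∈ cycleMaxima σ ↔ ∀ y, σ.SameCycle x y → y ≤ x := by
  simp [cycleMaxima]

theorem card_cycleFactorsFinset_eq_card_cycleMaxima_filter_ne (σ : Perm α) :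
    #σ.cycleFactorsFinset = #{x ∈ cycleMaxima σ | σ x ≠ x} := by
  symm
  refine card_bij (fun x _ => σ.cycleOf x) (fun x hx => ?_) (fun x hx y hy hxy => ?_) fun c hc => ?_
  · exact cycleOf_mem_cycleFactorsFinset_iff.2 (mem_support.2 (mem_filter.1 hx).2)
  · simp only [mem_filter, mem_cycleMaxima] at hx hy
    have hsame : σ.SameCycle x y := by
      have : y ∈ (σ.cycleOf y).support := mem_support_cycleOf_iff.2 ⟨.rfl, mem_support.2 hy.2⟩
      exact (mem_support_cycleOf_iff.1 (hxy ▸ this)).1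
    exact le_antisymm (hy.1 x hsame.symm) (hx.1 y hsame)
  · have hne : c.support.Nonempty := (mem_cycleFactorsFinset_iff.1 hc).1.nonempty_support
    set x := c.support.max' hne
    have hx : x ∈ σ.support := mem_cycleFactorsFinset_support_le hc (c.support.max'_mem hne)
    have hcx : c = σ.cycleOf x := cycle_is_cycleOf (c.support.max'_mem hne) hc
    refine ⟨x, ?_, hcx.symm⟩
    simp only [mem_filter, mem_cycleMaxima, ← mem_support]
    refine ⟨fun y hy => c.support.le_max' y ?_, hx⟩
    rw [hcx]
    exact mem_support_cycleOf_iff.2 ⟨hy, hx⟩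

end cycleMaxima

variable {n : ℕ}

theorem decomposeFin_symm_sameCycle_succ_succ (p : Fin (n + 1)) (e : Perm (Fin n)) {x y : Fin n}
    (h : e.SameCycle x y) : (decomposeFin.symm (p, e)).SameCycle x.succ y.succ := by
  refine h.map_of_forall_sameCycle_apply Fin.succ fun z => ?_
  by_cases hz : (e z).succ = p
  · have h2 : (e z).succ = decomposeFin.symm (p, e) (decomposeFin.symm (p, e) z.succ) := by
      simp [hz]
    rw [h2, sameCycle_apply_right, sameCycle_apply_right]
  · exact ⟨1, by simp [swap_apply_of_ne_of_ne (Fin.succ_ne_zero _) hz]⟩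

/-- `decomposeFin.symm (c.succ, e)` acts as `e` on the successors, with `0` spliced into the
cycle just before `c.succ`; `decomposeFin.symm (0, e)` fixes `0` (and then `c` is arbitrary). -/
theorem sameCycle_cases_of_decomposeFin_symm_sameCycle {p : Fin (n + 1)} {c : Fin n}
    (hc : p = 0 ∨ p = c.succ) (e : Perm (Fin n)) {a b : Fin (n + 1)}
    (h : (decomposeFin.symm (p, e)).SameCycle a b) :
    e.SameCycle (Fin.cases c id a) (Fin.cases c id b) := by
  refine h.map_of_forall_sameCycle_apply _ fun a => ?_
  induction a using Fin.cases with
  | zero => rcases hc with rfl | rfl <;> simp [SameCycle.refl]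
  | succ z =>
    by_cases hz : (e z).succ = p
    · obtain rfl : p = c.succ := hc.resolve_left (hz ▸ Fin.succ_ne_zero _)
      simp [hz, (Fin.succ_injective _ hz).symm, sameCycle_apply_right, SameCycle.refl]
    · simp [swap_apply_of_ne_of_ne (Fin.succ_ne_zero _) hz, sameCycle_apply_right, SameCycle.refl]

theorem decomposeFin_symm_sameCycle_succ_succ_iff (p : Fin (n + 1)) (e : Perm (Fin n))
    (x y : Fin n) : (decomposeFin.symm (p, e)).SameCycle x.succ y.succ ↔ e.SameCycle x y := by
  refine ⟨fun h => ?_, decomposeFin_symm_sameCycle_succ_succ p e⟩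
  rcases Fin.eq_zero_or_eq_succ p with rfl | ⟨c, rfl⟩
  · exact sameCycle_cases_of_decomposeFin_symm_sameCycle (c := x) (.inl rfl) e h
  · exact sameCycle_cases_of_decomposeFin_symm_sameCycle (.inr rfl) e h

theorem zero_mem_cycleMaxima_decomposeFin_symm_iff (p : Fin (n + 1)) (e : Perm (Fin n)) :
    0 ∈ cycleMaxima (decomposeFin.symm (p, e)) ↔ p = 0 := by
  rw [mem_cycleMaxima]
  refine ⟨fun h => Fin.le_zero_iff.1 (h p ⟨1, by simp⟩), fun hp y hy => ?_⟩
  have hfix : decomposeFin.symm (p, e) 0 = 0 := by simp [hp]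
  exact (hy.eq_of_left hfix).ge

theorem succ_mem_cycleMaxima_decomposeFin_symm_iff (p : Fin (n + 1)) (e : Perm (Fin n))
    (x : Fin n) : x.succ ∈ cycleMaxima (decomposeFin.symm (p, e)) ↔ x ∈ cycleMaxima e := by
  simp [mem_cycleMaxima, Fin.forall_fin_succ, decomposeFin_symm_sameCycle_succ_succ_iff]

theorem card_cycleMaxima_decomposeFin_symm (p : Fin (n + 1)) (e : Perm (Fin n)) :
    #(cycleMaxima (decomposeFin.symm (p, e))) = #(cycleMaxima e) + if p = 0 then 1 else 0 := by
  rw [Fin.card_eq_ite_add_card_succAbove _ 0, add_comm]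
  simp only [Fin.succAbove_zero, zero_mem_cycleMaxima_decomposeFin_symm_iff,
    succ_mem_cycleMaxima_decomposeFin_symm_iff, filter_univ_mem]

end Equiv.Perm

open Equiv.Perm

theorem numCycles_eq_card_cycleMaxima {n : ℕ} (σ : Perm (Fin n)) :
    numCycles σ = #(cycleMaxima σ) := by
  have hfixed : {x ∈ cycleMaxima σ | σ x = x} = ({x | σ x = x} : Finset (Fin n)) := by
    ext x
    simp only [mem_filter, mem_univ, true_and, mem_cycleMaxima]
    exact ⟨fun h => h.2, fun h => ⟨fun y hy => (hy.eq_of_left h).ge, h⟩⟩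
  rw [numCycles, cycleType_def, Multiset.card_map, ← hfixed]
  change #σ.cycleFactorsFinset + _ = _
  rw [card_cycleFactorsFinset_eq_card_cycleMaxima_filter_ne, add_comm,
    card_filter_add_card_filter_not]

theorem card_filter_card_leftToRightMaxima_eq (n k : ℕ) :
    #{σ : Perm (Fin n) | #(leftToRightMaxima σ) = k} = Nat.stirlingFirst n k :=
  card_filter_eq_stirlingFirst (fun _ σ => #(leftToRightMaxima σ)) insertMinEquiv
    (by simp [eq_empty_of_isEmpty]) (fun _ q e => card_leftToRightMaxima_insertMin q e) n k

theorem card_filter_numCycles_eq (n k : ℕ) :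
    #{σ : Perm (Fin n) | numCycles σ = k} = Nat.stirlingFirst n k := by
  simp only [numCycles_eq_card_cycleMaxima]
  exact card_filter_eq_stirlingFirst (fun _ σ => #(cycleMaxima σ)) (fun _ => decomposeFin.symm)
    (by simp [eq_empty_of_isEmpty]) (fun _ => card_cycleMaxima_decomposeFin_symm) n k

theorem coeff_RKle (k n j : ℕ) : (RKle k n).coeff j = #{σ : Perm (Fin n) | mmpKle k σ = j} := by
  simp [RKle, Polynomial.coeff_X_pow, eq_comm]

theorem stmt_12_general (n : ℕ) :
    (Finset.univ.filter (fun σ : Equiv.Perm (Fin n) => mmpKle 2 σ = 1)).card =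
      (Finset.univ.filter (fun σ : Equiv.Perm (Fin n) => numCycles σ = 3)).card ∧
    (RKle 2 n).coeff 1 =
      ((Finset.univ.filter (fun σ : Equiv.Perm (Fin n) => numCycles σ = 3)).card : ℤ) := by
  have hcount : #{σ : Perm (Fin n) | mmpKle 2 σ = 1} = #{σ : Perm (Fin n) | numCycles σ = 3} := by
    simp only [mmpKle_two_eq_one_iff, card_filter_card_leftToRightMaxima_eq,
      card_filter_numCycles_eq]
  exact ⟨hcount, by rw [coeff_RKle, hcount]⟩

theorem stmt_12 (n : ℕ) (hn : 3 ≤ n) :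
    (Finset.univ.filter (fun σ : Equiv.Perm (Fin n) => mmpKle 2 σ = 1)).card =
      (Finset.univ.filter (fun σ : Equiv.Perm (Fin n) => numCycles σ = 3)).card ∧
    (RKle 2 n).coeff 1 =
      ((Finset.univ.filter (fun σ : Equiv.Perm (Fin n) => numCycles σ = 3)).card : ℤ) :=
  stmt_12_general n
end

section
/- For every n ≥ 1 and σ ∈ S_n, mmp^{(1,0,2,0)}(σ) = 0 if and only if σ avoids both classical patterns 1234 and 2134. -/
/-- `mmp^{(1,0,2,0)}(σ)`: the number of indices `i` with at least 1 point in
quadrant I and at least 2 points in quadrant III relative to `(i, σ i)`. -/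
def mmp1020 {n : ℕ} (σ : Equiv.Perm (Fin n)) : ℕ :=
  (Finset.univ.filter (fun i => 1 ≤ quad1 σ i ∧ 2 ≤ quad3 σ i)).card

/-- `σ` avoids the classical pattern 1234. -/
def avoids1234 {n : ℕ} (σ : Equiv.Perm (Fin n)) : Prop :=
  ¬ ∃ i₁ i₂ i₃ i₄ : Fin n, i₁ < i₂ ∧ i₂ < i₃ ∧ i₃ < i₄ ∧
      σ i₁ < σ i₂ ∧ σ i₂ < σ i₃ ∧ σ i₃ < σ i₄

/-- `σ` avoids the classical pattern 2134. -/
def avoids2134 {n : ℕ} (σ : Equiv.Perm (Fin n)) : Prop :=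
  ¬ ∃ i₁ i₂ i₃ i₄ : Fin n, i₁ < i₂ ∧ i₂ < i₃ ∧ i₃ < i₄ ∧
      σ i₂ < σ i₁ ∧ σ i₁ < σ i₃ ∧ σ i₃ < σ i₄

theorem stmt_16 (n : ℕ) (hn : 1 ≤ n) :
    ∀ σ : Equiv.Perm (Fin n),
      mmp1020 σ = 0 ↔ (avoids1234 σ ∧ avoids2134 σ) := by
  intro σ
  have key : mmp1020 σ = 0 ↔ ∀ i : Fin n, ¬ (1 ≤ quad1 σ i ∧ 2 ≤ quad3 σ i) := by
    unfold mmp1020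
    rw [Finset.card_eq_zero, Finset.filter_eq_empty_iff]
    simp
  rw [key]
  constructor
  · intro h
    constructor
    · rintro ⟨i₁, i₂, i₃, i₄, h12, h23, h34, p12, p23, p34⟩
      refine h i₃ ⟨?_, ?_⟩
      · have : i₄ ∈ Finset.univ.filter (fun j => i₃ < j ∧ σ i₃ < σ j) := by
          simp [h34, p34]
        exact Finset.card_pos.mpr ⟨i₄, this⟩
      · refine Finset.one_lt_card.mpr ⟨i₁, ?_, i₂, ?_, h12.ne⟩
        · simp [h12.trans h23, p12.trans p23]
        · simp [h23, p23]
    · rintro ⟨i₁, i₂, i₃, i₄, h12, h23, h34, p21, p13, p34⟩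
      refine h i₃ ⟨?_, ?_⟩
      · have : i₄ ∈ Finset.univ.filter (fun j => i₃ < j ∧ σ i₃ < σ j) := by
          simp [h34, p34]
        exact Finset.card_pos.mpr ⟨i₄, this⟩
      · refine Finset.one_lt_card.mpr ⟨i₁, ?_, i₂, ?_, h12.ne⟩
        · simp [h12.trans h23, p13]
        · simp [h23, p21.trans p13]
  · rintro ⟨ha, hb⟩ i ⟨h1, h2⟩
    obtain ⟨j, hj⟩ := Finset.card_pos.mp h1
    simp only [Finset.mem_filter, Finset.mem_univ, true_and] at hj
    obtain ⟨k₁, hk₁, k₂, hk₂, hne⟩ := Finset.one_lt_card.mp h2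
    simp only [Finset.mem_filter, Finset.mem_univ, true_and] at hk₁ hk₂
    rcases lt_or_gt_of_ne hne with hlt | hlt
    · rcases lt_or_gt_of_ne (fun e => hne (σ.injective e) : σ k₁ ≠ σ k₂) with hv | hv
      · exact ha ⟨k₁, k₂, i, j, hlt, hk₂.1, hj.1, hv, hk₂.2, hj.2⟩
      · exact hb ⟨k₁, k₂, i, j, hlt, hk₂.1, hj.1, hv, hk₁.2, hj.2⟩
    · rcases lt_or_gt_of_ne (fun e => hne (σ.injective e) : σ k₁ ≠ σ k₂) with hv | hv
      · exact hb ⟨k₂, k₁, i, j, hlt, hk₁.1, hj.1, hv, hk₂.2, hj.2⟩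
      · exact ha ⟨k₂, k₁, i, j, hlt, hk₁.1, hj.1, hv, hk₁.2, hj.2⟩
end

section
/- For every n ≥ 2, B_n^{(1,0,1,0)}(x) = Σ_{1 ≤ i < j ≤ n} [ (n−2)! / ((i−1)!·(j−i−1)!·(n−j)!) ] · (j−i−1)! · x^{j−i−1} · R_{i−1}^{(0,0,1,0)}(x) · R_{n−j}^{(1,0,0,0)}(x), where R_0^{(0,0,1,0)}(x) = R_0^{(1,0,0,0)}(x) = 1. -/
/-- `mmp^{(1,0,1,0)}(σ)`. -/
def mmp1010 {n : ℕ} (σ : Equiv.Perm (Fin n)) : ℕ :=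
  (Finset.univ.filter (fun i => 1 ≤ quad1 σ i ∧ 1 ≤ quad3 σ i)).card

/-- `mmp^{(0,0,1,0)}(σ)`: indices with at least 1 point in quadrant III. -/
def mmp0010 {n : ℕ} (σ : Equiv.Perm (Fin n)) : ℕ :=
  (Finset.univ.filter (fun i => 1 ≤ quad3 σ i)).card

/-- `mmp^{(1,0,0,0)}(σ)`: indices with at least 1 point in quadrant I. -/
def mmp1000 {n : ℕ} (σ : Equiv.Perm (Fin n)) : ℕ :=
  (Finset.univ.filter (fun i => 1 ≤ quad1 σ i)).card

/-- `R_n^{(0,0,1,0)}(x)`. -/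
noncomputable def R0010 (n : ℕ) : Polynomial ℤ :=
  ∑ σ : Equiv.Perm (Fin n), Polynomial.X ^ mmp0010 σ

/-- `R_n^{(1,0,0,0)}(x)`. -/
noncomputable def R1000 (n : ℕ) : Polynomial ℤ :=
  ∑ σ : Equiv.Perm (Fin n), Polynomial.X ^ mmp1000 σ

/-!
Let `σ` put the entry `1` at position `p` and the entry `n` at position `q > p`. Every entry strictly
between them matches `(1,0,1,0)` (witnessed by `1` and `n`), the entries `1` and `n` do not, an entry
left of `p` matches iff it matches `(0,0,1,0)` inside the prefix, and an entry right of `q` iff it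
matches `(1,0,0,0)` inside the suffix. So `mmp^{(1,0,1,0)}(σ)` is `q - p - 1` plus the statistics of
the standardized prefix and suffix. Permuting the prefix positions and the suffix positions among
themselves multiplies this pair of patterns on the right, so every pair of patterns is realised
equally often: by `(n-2)! / (p! (n-1-q)!)` of the `(n-2)!` permutations with `1` at `p` and `n`
at `q`.
-/

open Finset Equiv Polynomial
open scoped Nat

theorem one_le_quad1_iff {n : ℕ} (σ : Perm (Fin n)) (i : Fin n) :
    1 ≤ quad1 σ i ↔ ∃ j, i < j ∧ σ i < σ j := by
  simp [quad1, one_le_card, filter_nonempty_iff]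

theorem one_le_quad3_iff {n : ℕ} (σ : Perm (Fin n)) (i : Fin n) :
    1 ≤ quad3 σ i ↔ ∃ j < i, σ j < σ i := by
  simp [quad3, one_le_card, filter_nonempty_iff]

section Standardize

variable {k : ℕ} {β : Type*} [LinearOrder β]

def rank (f : Fin k → β) (x : Fin k) : ℕ := #{l | f l < f x}

theorem rank_lt (f : Fin k → β) (x : Fin k) : rank f x < k :=
  (card_lt_card (s := {l | f l < f x})
    (filter_ssubset.2 ⟨x, mem_univ _, lt_irrefl _⟩)).trans_eq (card_fin k)

theorem rank_strictMono {f : Fin k → β} {l x : Fin k} (h : f l < f x) : rank f l < rank f x :=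
  card_lt_card <| ssubset_iff_of_subset (monotone_filter_right _ fun _ _ hy => hy.trans h)
    |>.2 ⟨l, by simp [h]⟩

theorem rank_lt_rank_iff {f : Fin k → β} (hf : Function.Injective f) {l x : Fin k} :
    rank f l < rank f x ↔ f l < f x := by
  refine ⟨fun h => ?_, rank_strictMono⟩
  rcases lt_trichotomy (f l) (f x) with hlt | heq | hgt
  · exact hlt
  · exact absurd h (by rw [hf heq]; exact lt_irrefl _)
  · exact absurd h (rank_strictMono hgt).asymm

noncomputable def standardize (f : Fin k → β) (hf : Function.Injective f) : Perm (Fin k) :=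
  Equiv.ofBijective (fun x => ⟨rank f x, rank_lt f x⟩) <| Finite.injective_iff_bijective.1
    fun l x h => hf <| by
      have hrank : rank f l = rank f x := Fin.mk.inj h
      exact le_antisymm (not_lt.1 fun hxl => (rank_strictMono hxl).ne' hrank)
        (not_lt.1 fun hlx => (rank_strictMono hlx).ne hrank)

theorem standardize_lt_standardize_iff {f : Fin k → β} (hf : Function.Injective f)
    {l x : Fin k} : standardize f hf l < standardize f hf x ↔ f l < f x :=
  rank_lt_rank_iff hf

theorem standardize_comp {f : Fin k → β} (hf : Function.Injective f) (π : Perm (Fin k)) :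
    standardize (f ∘ π) (hf.comp π.injective) = standardize f hf * π := by
  ext x
  change #{l | f (π l) < f (π x)} = #{l | f l < f (π x)}
  exact card_nbij π (fun _ => by simp) π.injective.injOn
    (fun y hy => ⟨π.symm y, by simpa using hy, by simp⟩)

theorem mmp0010_standardize {f : Fin k → β} (hf : Function.Injective f) :
    mmp0010 (standardize f hf) = #{x | ∃ l < x, f l < f x} := by
  simp only [mmp0010, one_le_quad3_iff, standardize_lt_standardize_iff]

theorem mmp1000_standardize {f : Fin k → β} (hf : Function.Injective f) :
    mmp1000 (standardize f hf) = #{x | ∃ l, x < l ∧ f x < f l} := by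
  simp only [mmp1000, one_le_quad1_iff, standardize_lt_standardize_iff]

end Standardize

section Patterns

variable {α : Type*} [LinearOrder α]

theorem card_filter_orderEmbOfFin (S : Finset α) (P : α → Prop) [DecidablePred P] :
    #{x : Fin #S | P (S.orderEmbOfFin rfl x)} = #{i ∈ S | P i} := by
  have h := congrArg card
    (filter_map (f := (S.orderEmbOfFin rfl).toEmbedding) (s := univ) (p := P))
  rw [map_orderEmbOfFin_univ, card_map] at h
  exact h.symm

noncomputable def Equiv.Perm.patternOn (σ : Perm α) (S : Finset α) : Perm (Fin #S) :=
  standardize (σ ∘ S.orderEmbOfFin rfl) (σ.injective.comp (S.orderEmbOfFin rfl).injective)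

theorem Equiv.Perm.patternOn_mul (σ τ : Perm α) (S : Finset α) (π : Perm (Fin #S))
    (hτ : ∀ l, τ (S.orderEmbOfFin rfl l) = S.orderEmbOfFin rfl (π l)) :
    (σ * τ).patternOn S = σ.patternOn S * π := by
  have hcomp : (σ * τ) ∘ S.orderEmbOfFin rfl = (σ ∘ S.orderEmbOfFin rfl) ∘ π :=
    funext fun l => congrArg σ (hτ l)
  unfold patternOn
  simp only [hcomp]
  exact standardize_comp _ π

theorem Equiv.Perm.mmp0010_patternOn [Fintype α] (σ : Perm α) {S : Finset α}
    (hS : IsLowerSet (S : Set α)) :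
    mmp0010 (σ.patternOn S) = #{i ∈ S | ∃ j < i, σ j < σ i} := by
  set e := S.orderEmbOfFin rfl
  rw [patternOn, mmp0010_standardize, ← card_filter_orderEmbOfFin S]
  refine congrArg card <| filter_congr fun x _ =>
    ⟨fun ⟨l, hl, h⟩ => ⟨e l, e.lt_iff_lt.2 hl, h⟩, ?_⟩
  rintro ⟨j, hj, h⟩
  obtain ⟨l, rfl⟩ : j ∈ Set.range e := by
    rw [range_orderEmbOfFin]
    exact hS hj.le (orderEmbOfFin_mem S rfl x)
  exact ⟨l, e.lt_iff_lt.1 hj, h⟩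

theorem Equiv.Perm.mmp1000_patternOn [Fintype α] (σ : Perm α) {S : Finset α}
    (hS : IsUpperSet (S : Set α)) :
    mmp1000 (σ.patternOn S) = #{i ∈ S | ∃ j, i < j ∧ σ i < σ j} := by
  set e := S.orderEmbOfFin rfl
  rw [patternOn, mmp1000_standardize, ← card_filter_orderEmbOfFin S]
  refine congrArg card <| filter_congr fun x _ =>
    ⟨fun ⟨l, hl, h⟩ => ⟨e l, e.lt_iff_lt.2 hl, h⟩, ?_⟩
  rintro ⟨j, hj, h⟩
  obtain ⟨l, rfl⟩ : j ∈ Set.range e := by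
    rw [range_orderEmbOfFin]
    exact hS hj.le (orderEmbOfFin_mem S rfl x)
  exact ⟨l, e.lt_iff_lt.1 hj, h⟩

noncomputable def blockPerm (S T : Finset α) (π : Perm (Fin #S) × Perm (Fin #T)) : Perm α :=
  π.1.extendDomain (p := (· ∈ S)) (S.orderIsoOfFin rfl).toEquiv *
    π.2.extendDomain (p := (· ∈ T)) (T.orderIsoOfFin rfl).toEquiv

variable {S T : Finset α} (π : Perm (Fin #S) × Perm (Fin #T))

theorem blockPerm_apply_of_notMem {x : α} (hS : x ∉ S) (hT : x ∉ T) :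
    blockPerm S T π x = x := by
  rw [blockPerm, Perm.mul_apply, Perm.extendDomain_apply_not_subtype _ _ hT,
    Perm.extendDomain_apply_not_subtype _ _ hS]

variable (hST : Disjoint S T)
include hST

theorem blockPerm_apply_orderEmbOfFin_left (l : Fin #S) :
    blockPerm S T π (S.orderEmbOfFin rfl l) = S.orderEmbOfFin rfl (π.1 l) := by
  have hl (l) : S.orderEmbOfFin rfl l = ((S.orderIsoOfFin rfl).toEquiv l : α) := rfl
  rw [blockPerm, Perm.mul_apply, Perm.extendDomain_apply_not_subtype _ _
    (disjoint_left.1 hST (orderEmbOfFin_mem S rfl l)), hl, hl, Perm.extendDomain_apply_image]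

theorem blockPerm_apply_orderEmbOfFin_right (l : Fin #T) :
    blockPerm S T π (T.orderEmbOfFin rfl l) = T.orderEmbOfFin rfl (π.2 l) := by
  have hl (l) : T.orderEmbOfFin rfl l = ((T.orderIsoOfFin rfl).toEquiv l : α) := rfl
  rw [blockPerm, Perm.mul_apply, hl, hl, Perm.extendDomain_apply_image]
  exact Perm.extendDomain_apply_not_subtype _ _
    (disjoint_right.1 hST (orderEmbOfFin_mem T rfl _))

end Patterns

section Fibers

variable {G H M : Type*} [Group G] [Group H] [DecidableEq H] [AddCommMonoid M]
  {s : Finset G} {st : G → H} {act : H → G}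

theorem card_filter_eq_card_filter_one (hs : ∀ g ∈ s, ∀ h, g * act h ∈ s)
    (hst : ∀ g h, st (g * act h) = st g * h) (h : H) :
    #{g ∈ s | st g = h} = #{g ∈ s | st g = 1} := by
  apply le_antisymm
  · refine card_le_card_of_injOn (· * act h⁻¹) (fun g hg => ?_) (mul_left_injective _).injOn
    simp only [mem_coe, mem_filter] at hg ⊢
    exact ⟨hs g hg.1 _, by rw [hst, hg.2, mul_inv_cancel]⟩
  · refine card_le_card_of_injOn (· * act h) (fun g hg => ?_) (mul_left_injective _).injOn
    simp only [mem_coe, mem_filter] at hg ⊢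
    exact ⟨hs g hg.1 _, by rw [hst, hg.2, one_mul]⟩

theorem sum_comp_eq_card_div_smul_sum [Fintype H] (hs : ∀ g ∈ s, ∀ h, g * act h ∈ s)
    (hst : ∀ g h, st (g * act h) = st g * h) (F : H → M) :
    ∑ g ∈ s, F (st g) = (#s / Fintype.card H) • ∑ h, F h := by
  have hfiber := card_filter_eq_card_filter_one hs hst
  have hcard : #s = Fintype.card H * #{g ∈ s | st g = 1} := by
    rw [card_eq_sum_card_fiberwise (f := st) (t := univ) (fun _ _ => mem_univ _),
      sum_congr rfl fun h _ => hfiber h, sum_const, Finset.card_univ, smul_eq_mul]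
  rw [hcard, Nat.mul_div_cancel_left _ Fintype.card_pos, smul_sum,
    ← sum_fiberwise_of_maps_to (g := st) (t := univ) (fun _ _ => mem_univ _)]
  refine sum_congr rfl fun h _ => ?_
  rw [sum_congr rfl fun g hg => by rw [(mem_filter.1 hg).2], sum_const, hfiber]

end Fibers

theorem card_filter_apply_eq_apply_eq {α : Type*} [Fintype α] [DecidableEq α] {p q u v : α}
    (hpq : p ≠ q) (huv : u ≠ v) :
    #{σ : Perm α | σ p = u ∧ σ q = v} = (Fintype.card α - 2)! := by
  obtain ⟨σ₀, hp, hq⟩ : ∃ σ₀ : Perm α, σ₀ p = u ∧ σ₀ q = v := by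
    have hqu : swap p u q ≠ u := fun h =>
      hpq ((swap p u).injective (h.trans (swap_apply_left p u).symm)).symm
    exact ⟨swap (swap p u q) v * swap p u, by simp [swap_apply_of_ne_of_ne hqu.symm huv],
      by simp⟩
  have htranslate : #{σ : Perm α | σ p = u ∧ σ q = v} = #{ρ : Perm α | ρ p = p ∧ ρ q = q} :=
    card_nbij' (σ₀⁻¹ * ·) (σ₀ * ·) (fun σ hσ => by simp_all [Equiv.symm_apply_eq])
      (fun ρ hρ => by simp_all) (fun σ _ => by simp) (fun ρ _ => by simp)
  have hfix (ρ : Perm α) : (ρ p = p ∧ ρ q = q) ↔ ∀ a, ¬(a ≠ p ∧ a ≠ q) → ρ a = a := by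
    constructor
    · rintro ⟨hp, hq⟩ a ha
      push Not at ha
      by_cases hap : a = p
      · rwa [hap]
      · rwa [ha hap]
    · intro h
      exact ⟨h p (by simp), h q (by simp)⟩
  have hcompl : ({a | a ≠ p ∧ a ≠ q} : Finset α) = univ \ {p, q} := by
    ext
    simp [not_or]
  rw [htranslate, ← Fintype.card_subtype, Fintype.card_congr (Equiv.subtypeEquivRight hfix),
    ← Fintype.card_congr (Perm.subtypeEquivSubtypePerm _), Fintype.card_perm,
    Fintype.card_subtype, hcompl, card_sdiff_of_subset (subset_univ _), card_pair hpq,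
    Finset.card_univ]

theorem mmp1010_eq_of_apply_eq {n : ℕ} {σ : Perm (Fin n)} {lo hi p q : Fin n} (hlo : IsBot lo)
    (hhi : IsTop hi) (hpq : p < q) (hp : σ p = lo) (hq : σ q = hi) :
    mmp1010 σ =
      mmp0010 (σ.patternOn (Iio p)) + (q - p - 1 : ℕ) + mmp1000 (σ.patternOn (Ioi q)) := by
  rw [σ.mmp0010_patternOn (by rw [coe_Iio]; exact isLowerSet_Iio p),
    σ.mmp1000_patternOn (by rw [coe_Ioi]; exact isUpperSet_Ioi q)]
  have lt_max {i} (hi : i ≠ q) : σ i < σ q := hq ▸ (hhi _).lt_of_ne (hq ▸ σ.injective.ne hi)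
  have min_lt {i} (hi : i ≠ p) : σ p < σ i := hp ▸ (hlo _).lt_of_ne' (hp ▸ σ.injective.ne hi)
  have hsplit : ({i | 1 ≤ quad1 σ i ∧ 1 ≤ quad3 σ i} : Finset (Fin n)) =
      ({i ∈ Iio p | ∃ j < i, σ j < σ i} ∪ Ioo p q) ∪ {i ∈ Ioi q | ∃ j, i < j ∧ σ i < σ j} := by
    ext i
    simp only [one_le_quad1_iff, one_le_quad3_iff, mem_union, mem_filter, mem_univ, true_and,
      mem_Iio, mem_Ioo, mem_Ioi]
    constructor
    · rintro ⟨⟨j, hij, hj⟩, ⟨k, hki, hk⟩⟩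
      rcases lt_trichotomy i p with hip | rfl | hpi
      · exact Or.inl (Or.inl ⟨hip, k, hki, hk⟩)
      · exact absurd hk (hp ▸ hlo _).not_gt
      · rcases lt_trichotomy i q with hiq | rfl | hqi
        · exact Or.inl (Or.inr ⟨hpi, hiq⟩)
        · exact absurd hj (hq ▸ hhi _).not_gt
        · exact Or.inr ⟨hqi, j, hij, hj⟩
    · rintro ((⟨hip, hB⟩ | ⟨hpi, hiq⟩) | ⟨hqi, hA⟩)
      · exact ⟨⟨q, hip.trans hpq, lt_max (hip.trans hpq).ne⟩, hB⟩
      · exact ⟨⟨q, hiq, lt_max hiq.ne⟩, ⟨p, hpi, min_lt hpi.ne'⟩⟩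
      · exact ⟨hA, ⟨p, hpq.trans hqi, min_lt (hpq.trans hqi).ne'⟩⟩
  rw [mmp1010, hsplit, card_union_of_disjoint, card_union_of_disjoint, Fin.card_Ioo]
  -- the two sides differ only in the `Decidable` instances of the filters
  · congr
  · exact disjoint_left.2 fun i hi hi' => by
      simp only [mem_filter, mem_Iio, mem_Ioo] at hi hi'
      order
  · exact disjoint_left.2 fun i hi hi' => by
      simp only [mem_union, mem_filter, mem_Iio, mem_Ioo, mem_Ioi] at hi hi'
      rcases hi with ⟨h, -⟩ | ⟨-, h⟩ <;> order

theorem sum_pow_mmp0010_mul_pow_mmp1000 (a c : ℕ) :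
    ∑ π : Perm (Fin a) × Perm (Fin c), (X : ℤ[X]) ^ mmp0010 π.1 * X ^ mmp1000 π.2 =
      R0010 a * R1000 c := by
  rw [R0010, R1000, sum_mul_sum, ← univ_product_univ, sum_product]

theorem sum_pow_mmp1010_filter_symm_eq {n : ℕ} {lo hi : Fin n} (hlo : IsBot lo)
    (hhi : IsTop hi) {p q : Fin n} (hpq : p < q) :
    ∑ σ ∈ univ.filter (fun σ : Perm (Fin n) => σ.symm lo = p ∧ σ.symm hi = q),
        (X : ℤ[X]) ^ mmp1010 σ =
      ((n - 2)! / ((p : ℕ)! * (n - 1 - q)!)) •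
        (X ^ (q - p - 1 : ℕ) * (R0010 p * R1000 (n - 1 - q))) := by
  set s := univ.filter (fun σ : Perm (Fin n) => σ p = lo ∧ σ q = hi)
  have hs_eq : univ.filter (fun σ : Perm (Fin n) => σ.symm lo = p ∧ σ.symm hi = q) = s :=
    filter_congr fun σ _ => by
      rw [Equiv.symm_apply_eq, Equiv.symm_apply_eq, eq_comm (a := lo), eq_comm (a := hi)]
  have hST : Disjoint (Iio p) (Ioi q) := disjoint_left.2 fun i hi hi' => by
    simp only [mem_Iio, mem_Ioi] at hi hi'
    order
  have hs : ∀ σ ∈ s, ∀ π, σ * blockPerm (Iio p) (Ioi q) π ∈ s := by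
    intro σ hσ π
    simp only [s, mem_filter, mem_univ, true_and, Perm.mul_apply] at hσ ⊢
    rwa [blockPerm_apply_of_notMem π (by simp) (by simp [hpq.le]),
      blockPerm_apply_of_notMem π (by simp [hpq.le]) (by simp)]
  have hst (σ : Perm (Fin n)) π : ((σ * blockPerm (Iio p) (Ioi q) π).patternOn (Iio p),
      (σ * blockPerm (Iio p) (Ioi q) π).patternOn (Ioi q)) =
      (σ.patternOn (Iio p), σ.patternOn (Ioi q)) * π :=
    Prod.ext (σ.patternOn_mul _ _ _ (blockPerm_apply_orderEmbOfFin_left π hST))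
      (σ.patternOn_mul _ _ _ (blockPerm_apply_orderEmbOfFin_right π hST))
  have hmmp : ∀ σ ∈ s, (X : ℤ[X]) ^ mmp1010 σ = X ^ (q - p - 1 : ℕ) *
      (X ^ mmp0010 (σ.patternOn (Iio p)) * X ^ mmp1000 (σ.patternOn (Ioi q))) := by
    intro σ hσ
    rw [mem_filter] at hσ
    rw [mmp1010_eq_of_apply_eq hlo hhi hpq hσ.2.1 hσ.2.2, pow_add, pow_add]
    ring
  have hfibers := sum_comp_eq_card_div_smul_sum
    (st := fun σ => (σ.patternOn (Iio p), σ.patternOn (Ioi q))) hs hst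
    (fun π => (X : ℤ[X]) ^ mmp0010 π.1 * X ^ mmp1000 π.2)
  simp only at hfibers
  rw [hs_eq, sum_congr rfl hmmp, ← mul_sum, hfibers, sum_pow_mmp0010_mul_pow_mmp1000,
    card_filter_apply_eq_apply_eq hpq.ne ((hlo p).trans_lt (hpq.trans_le (hhi q))).ne,
    Fintype.card_prod, Fintype.card_perm, Fintype.card_perm, Fintype.card_fin,
    Fintype.card_fin, Fintype.card_fin, Fin.card_Iio, Fin.card_Ioi, mul_smul_comm]

theorem sum_filter_lt_eq_sum_sum_filter_eq {ι α M : Type*} [Fintype ι] [LinearOrder α]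
    [Fintype α] [LocallyFiniteOrderTop α] [AddCommMonoid M] (u v : ι → α) (f : ι → M) :
    ∑ x ∈ univ.filter (fun x => u x < v x), f x =
      ∑ a, ∑ b ∈ Ioi a, ∑ x ∈ univ.filter (fun x => u x = a ∧ v x = b), f x := by
  rw [← sum_fiberwise_of_maps_to (g := u) (t := univ) fun _ _ => mem_univ _]
  refine sum_congr rfl fun a _ => ?_
  rw [← sum_fiberwise_of_maps_to (g := v) (t := Ioi a) fun x hx => by
    simp only [mem_filter] at hx
    exact mem_Ioi.2 (hx.2 ▸ hx.1.2)]
  refine sum_congr rfl fun b hb => ?_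
  rw [filter_filter, filter_filter]
  refine sum_congr (filter_congr fun x _ => and_iff_right_of_imp ?_) fun _ _ => rfl
  rintro ⟨rfl, rfl⟩
  exact mem_Ioi.1 hb

theorem sum_fin_sum_Ioi_eq_sum_Icc_sum_Icc {M : Type*} [AddCommMonoid M] (n : ℕ)
    (g : ℕ → ℕ → M) :
    ∑ a : Fin n, ∑ b ∈ Ioi a, g (a + 1) (b + 1) = ∑ i ∈ Icc 1 n, ∑ j ∈ Icc (i + 1) n, g i j := by
  have hIco (k : ℕ) : Ico (k + 1) (n + 1) = Icc (k + 1) n := by ext; simp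
  have hinner (a : Fin n) (h : ℕ → M) :
      ∑ b ∈ Ioi a, h (b + 1) = ∑ j ∈ Icc ((a : ℕ) + 1 + 1) n, h j := by
    rw [show ∑ b ∈ Ioi a, h (b + 1) = ∑ k ∈ (Ioi a).map Fin.valEmbedding, h (k + 1) from
      (sum_map (Ioi a) Fin.valEmbedding fun k => h (k + 1)).symm, Fin.map_valEmbedding_Ioi,
      show Ioo (a : ℕ) n = Ico ((a : ℕ) + 1) n by ext; simp, sum_Ico_add', hIco]
  simp_rw [hinner]
  rw [Fin.sum_univ_eq_sum_range (fun k => ∑ j ∈ Icc (k + 1 + 1) n, g (k + 1) j), range_eq_Ico,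
    sum_Ico_add' (fun i => ∑ j ∈ Icc (i + 1) n, g i j), zero_add, hIco]

theorem factorial_div_mul_factorial {a b c N : ℕ} (h : a + b + c = N) :
    N ! / (a ! * b ! * c !) * b ! = N ! / (a ! * c !) := by
  obtain ⟨t, ht⟩ : a ! * b ! * c ! ∣ N ! := by
    rw [← h, mul_assoc, add_assoc]
    exact (Nat.mul_dvd_mul_left _ (Nat.factorial_mul_factorial_dvd_factorial_add b c)).trans
      (Nat.factorial_mul_factorial_dvd_factorial_add a (b + c))
  rw [ht, Nat.mul_div_cancel_left _ (by positivity),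
    show a ! * b ! * c ! * t = a ! * c ! * (t * b !) by ring,
    Nat.mul_div_cancel_left _ (by positivity)]

theorem stmt_17 (n : ℕ) (hn : 2 ≤ n) :
    (∑ σ ∈ Finset.univ.filter (fun σ : Equiv.Perm (Fin n) =>
        σ.symm ⟨0, by omega⟩ < σ.symm ⟨n - 1, by omega⟩),
      (Polynomial.X : Polynomial ℤ) ^ mmp1010 σ) =
    ∑ i ∈ Finset.Icc 1 n, ∑ j ∈ Finset.Icc (i + 1) n,
      ((Nat.factorial (n - 2) /
          (Nat.factorial (i - 1) * Nat.factorial (j - i - 1) * Nat.factorial (n - j)) *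
          Nat.factorial (j - i - 1) : ℕ) : Polynomial ℤ) *
        Polynomial.X ^ (j - i - 1) * R0010 (i - 1) * R1000 (n - j) := by
  have hlo : IsBot (⟨0, by omega⟩ : Fin n) := fun x => Nat.zero_le x
  have hhi : IsTop (⟨n - 1, by omega⟩ : Fin n) := fun x => Nat.le_sub_one_of_lt x.isLt
  rw [sum_filter_lt_eq_sum_sum_filter_eq, ← sum_fin_sum_Ioi_eq_sum_Icc_sum_Icc]
  refine sum_congr rfl fun p _ => sum_congr rfl fun q hq => ?_
  have hpq : p < q := mem_Ioi.1 hq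
  have hqn := q.isLt
  rw [sum_pow_mmp1010_filter_symm_eq hlo hhi hpq, Nat.add_sub_cancel, Nat.add_sub_add_right,
    factorial_div_mul_factorial (N := n - 2) (by omega), nsmul_eq_mul,
    show n - (q + 1) = n - 1 - q by omega]
  ring
end
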